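/- arXiv:1306.2612 — 3 statements merged into one kernel-verified Lean document; each statement's English description precedes it below -/
import Mathlib

section
/- Let S be a Hausdorff pseudocompact primitive topological inverse semigroup, written as the orthogonal sum of a family {B_{λ_i}(G_i)}_{i∈I} of topological Brandt semigroups with zero. Then every non-zero idempotent of S is an isolated point of the set E(S) of idempotents of S, and E(S) is a compact (topological) semilattice. -/
/-!
In an inverse semigroup idempotents commute, so in a primitive one distinct idempotents are
orthogonal: a non-zero idempotent `e` is the only idempotent with `e * f ≠ 0`, which isolates it
in `E(S)`. The continuous retraction `x ↦ x * x⁻¹` of `S` onto `E(S)` therefore has open fibres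
over the non-zero idempotents. For an open `U ∋ 0` the fibres over `E(S) \ U` form a locally
finite family of non-empty open sets, finite by pseudocompactness. So every neighbourhood of `0`
contains all but finitely many idempotents, and `E(S)` is compact.
-/

open Topology

/-- A (Hausdorff) topological space is *pseudocompact* if every locally finite
family of non-empty open subsets is finite. -/
def IsPseudocompact (X : Type*) [TopologicalSpace X] : Prop :=
  ∀ 𝒰 : Set (Set X), (∀ U ∈ 𝒰, IsOpen U ∧ U.Nonempty) →
    LocallyFinite (fun U : 𝒰 => (U : Set X)) → 𝒰.Finite

/-- `inv` witnesses that the semigroup `S` is an *inverse semigroup*: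
for every `x`, `inv x` is the unique `y` with `x*y*x = x` and `y*x*y = y`. -/
structure IsInverseSemigroup (S : Type*) [Mul S] (inv : S → S) : Prop where
  mul_inv_mul : ∀ x : S, x * inv x * x = x
  inv_mul_inv : ∀ x : S, inv x * x * inv x = inv x
  inv_unique : ∀ x y : S, x * y * x = x → y * x * y = y → y = inv x

/-- A semigroup with zero is *primitive* when every non-zero idempotent is
minimal among non-zero idempotents for the natural partial order
`f ≤ e ↔ f*e = e*f = f`. -/
def IsPrimitiveInverse (S : Type*) [Mul S] [Zero S] : Prop :=
  ∀ e f : S, IsIdempotentElem e → e ≠ 0 → IsIdempotentElem f → f ≠ 0 →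
    f * e = f → e * f = f → f = e

/-- The orthogonal sum of the family of Brandt extensions `B_{λ i}(G i)`:
the set `{0} ∪ ⋃ i, (λ i × G i × λ i)`. -/
abbrev OrthSum (I : Type*) (ι : I → Type*) (G : I → Type*) : Type _ :=
  Option (Σ i : I, ι i × G i × ι i)

instance (I : Type*) (ι : I → Type*) (G : I → Type*) : Zero (OrthSum I ι G) :=
  ⟨(none : Option (Σ i : I, ι i × G i × ι i))⟩

/-- The non-zero element `(α, g, β)` of the summand `B_{λ i}(G i)`. -/
def OrthSum.elem {I : Type*} {ι : I → Type*} {G : I → Type*}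
    (i : I) (α : ι i) (g : G i) (β : ι i) : OrthSum I ι G :=
  some ⟨i, (α, g, β)⟩

open Classical in
/-- Multiplication of the orthogonal sum: products are computed inside the
summand `B_{λ i}(G i)` when both factors lie in it, and are `0` otherwise. -/
noncomputable instance (I : Type*) (ι : I → Type*) (G : I → Type*) [∀ i, Mul (G i)] :
    Mul (OrthSum I ι G) :=
  ⟨fun x y =>
    match x, y with
    | some ⟨i, (α, a, β)⟩, some ⟨j, (γ, b, δ)⟩ =>
        if h : i = j then
          (if cast (congrArg ι h) β = γ then
            (some ⟨j, (cast (congrArg ι h) α, (cast (congrArg G h) a) * b, δ)⟩ :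
              Option (Σ i : I, ι i × G i × ι i))
          else none)
        else none
    | _, _ => none⟩

/-- A witness that the semigroup `S` with zero is (isomorphic, as a semigroup
with zero, to) the orthogonal sum of a family of Brandt semigroups
`B_{λ i}(G i)`, `λ i ≥ 1`. -/
structure BrandtDecomposition (S : Type*) [Mul S] [Zero S] where
  I : Type*
  ι : I → Type*
  G : I → Type*
  [instNonempty : ∀ i, Nonempty (ι i)]
  [instGroup : ∀ i, Group (G i)]
  e : S ≃ OrthSum I ι G
  map_mul : ∀ x y : S, e (x * y) = e x * e y
  map_zero : e 0 = 0

open Set Filter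

section Pseudocompact

variable {X Y ι : Type*} [TopologicalSpace X] [TopologicalSpace Y]

theorem IsPseudocompact.finite_of_locallyFinite (hX : IsPseudocompact X) {f : ι → Set X}
    (hopen : ∀ i, IsOpen (f i)) (hne : ∀ i, (f i).Nonempty) (hinj : Function.Injective f)
    (hf : LocallyFinite f) : Finite ι :=
  have : Finite (range f) :=
    (hX (range f) (by rintro _ ⟨i, rfl⟩; exact ⟨hopen i, hne i⟩) hf.on_range).to_subtype
  Finite.of_injective_finite_range hinj

theorem IsPseudocompact.finite_range_diff (hX : IsPseudocompact X) {q : X → Y}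
    (hq : Continuous q) {U : Set Y} (hU : IsOpen U) (hfib : ∀ y ∉ U, IsOpen (q ⁻¹' {y})) :
    (range q \ U).Finite := by
  let fiber : ↥(range q \ U) → Set X := fun y => q ⁻¹' {(y : Y)}
  have hne : ∀ y, (fiber y).Nonempty := fun ⟨_, ⟨x, rfl⟩, _⟩ => ⟨x, rfl⟩
  have hinj : Function.Injective fiber := fun y y' hyy' => by
    obtain ⟨x, hx⟩ := hne y
    exact Subtype.ext (hx.symm.trans (hyy' ▸ hx : x ∈ fiber y'))
  -- each point has a neighbourhood meeting at most one fibre: `q ⁻¹' U` or its own fibre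
  have hlf : LocallyFinite fiber := by
    intro x
    by_cases hx : q x ∈ U
    · refine ⟨q ⁻¹' U, (hU.preimage hq).mem_nhds hx, finite_empty.subset ?_⟩
      rintro ⟨y, hy⟩ ⟨z, hzy, hzU⟩
      obtain rfl : q z = y := hzy
      exact hy.2 hzU
    · refine ⟨q ⁻¹' {q x}, (hfib _ hx).mem_nhds rfl,
        (finite_singleton ⟨q x, ⟨x, rfl⟩, hx⟩).subset ?_⟩
      rintro ⟨y, hy⟩ ⟨z, hzy, hzx⟩
      exact Subtype.ext (hzy.symm.trans hzx)
  exact finite_coe_iff.mp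
    (hX.finite_of_locallyFinite (fun y => hfib y y.2.2) hne hinj hlf)

theorem IsPseudocompact.isCompact_insert_range (hX : IsPseudocompact X) {q : X → Y}
    (hq : Continuous q) (a : Y) (hfib : ∀ y ≠ a, IsOpen (q ⁻¹' {y})) :
    IsCompact (insert a (range q)) := by
  have : Tendsto ((↑) : range q → Y) cofinite (𝓝 a) := by
    refine (nhds_basis_opens a).tendsto_right_iff.2 fun U ⟨haU, hU⟩ => ?_
    have hfin := hX.finite_range_diff hq hU fun y hy => hfib y (ne_of_mem_of_not_mem haU hy).symm
    exact eventually_cofinite.2 ((hfin.preimage Subtype.val_injective.injOn).subset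
      fun y hyU => ⟨y.2, hyU⟩)
  simpa only [Subtype.range_coe] using this.isCompact_insert_range_of_cofinite

theorem isOpen_preimage_singleton_of_inter_range_eq {q : X → Y} (hq : Continuous q)
    {V : Set Y} (hV : IsOpen V) {y : Y} (hVy : V ∩ range q = {y}) : IsOpen (q ⁻¹' {y}) := by
  rw [← hVy, preimage_inter, preimage_range, inter_univ]
  exact hV.preimage hq

end Pseudocompact

namespace IsInverseSemigroup

variable {S : Type*} [Semigroup S] {inv : S → S}

theorem inv_eq_self_of_isIdempotentElem (h : IsInverseSemigroup S inv) {e : S}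
    (he : IsIdempotentElem e) : inv e = e :=
  (h.inv_unique e e (by rw [he, he]) (by rw [he, he])).symm

theorem inv_inv (h : IsInverseSemigroup S inv) (x : S) : inv (inv x) = x :=
  (h.inv_unique (inv x) x (h.inv_mul_inv x) (h.mul_inv_mul x)).symm

theorem isIdempotentElem_mul_inv (h : IsInverseSemigroup S inv) (x : S) :
    IsIdempotentElem (x * inv x) := by
  rw [IsIdempotentElem, ← mul_assoc, h.mul_inv_mul]

theorem isIdempotentElem_mul (h : IsInverseSemigroup S inv) {e f : S}
    (he : IsIdempotentElem e) (hf : IsIdempotentElem f) : IsIdempotentElem (e * f) := by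
  set x := inv (e * f)
  -- `f * x * e` is also an inverse of `e * f`; hence it equals `x`, which makes `x` idempotent
  have hx : f * x * e = x := by
    refine h.inv_unique (e * f) _ ?_ ?_
    · simpa only [mul_assoc, he.mul_self_mul, hf.mul_self_mul] using h.mul_inv_mul (e * f)
    · calc f * x * e * (e * f) * (f * x * e) = f * (x * (e * f) * x) * e := by
            simp only [mul_assoc, he.mul_self_mul, hf.mul_self_mul]
        _ = f * x * e := by rw [h.inv_mul_inv]
  have hxx : IsIdempotentElem x :=
    calc x * x = f * x * e * (f * x * e) := by rw [hx]
      _ = f * (x * (e * f) * x) * e := by simp only [mul_assoc]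
      _ = x := by rw [h.inv_mul_inv, hx]
  rw [← h.inv_inv (e * f), h.inv_eq_self_of_isIdempotentElem hxx]
  exact hxx

theorem mul_comm_of_isIdempotentElem (h : IsInverseSemigroup S inv) {e f : S}
    (he : IsIdempotentElem e) (hf : IsIdempotentElem f) : e * f = f * e := by
  have hef := h.isIdempotentElem_mul he hf
  have hfe := h.isIdempotentElem_mul hf he
  have : f * e = inv (e * f) := by
    refine h.inv_unique (e * f) _ ?_ ?_
    · simpa only [mul_assoc, he.mul_self_mul, hf.mul_self_mul] using hef.eq
    · simpa only [mul_assoc, he.mul_self_mul, hf.mul_self_mul] using hfe.eq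
  rw [this, h.inv_eq_self_of_isIdempotentElem hef]

theorem range_mul_inv (h : IsInverseSemigroup S inv) :
    range (fun x => x * inv x) = {e | IsIdempotentElem e} :=
  Subset.antisymm (range_subset_iff.2 h.isIdempotentElem_mul_inv) fun e (he : IsIdempotentElem e) =>
    ⟨e, by simp only [h.inv_eq_self_of_isIdempotentElem he, he.eq]⟩

end IsInverseSemigroup

theorem IsPrimitiveInverse.mul_eq_zero_of_ne {S : Type*} [SemigroupWithZero S] {inv : S → S}
    (hprim : IsPrimitiveInverse S) (h : IsInverseSemigroup S inv) {e f : S}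
    (he : IsIdempotentElem e) (hf : IsIdempotentElem f) (hne : e ≠ f) : e * f = 0 := by
  by_contra hef0
  rcases eq_or_ne e 0 with rfl | he0
  · exact hef0 (zero_mul f)
  rcases eq_or_ne f 0 with rfl | hf0
  · exact hef0 (mul_zero e)
  have hef := h.isIdempotentElem_mul he hf
  have hcomm := h.mul_comm_of_isIdempotentElem he hf
  -- `e * f` is a non-zero idempotent below both `e` and `f`
  have hefe : e * f = e := hprim e (e * f) he he0 hef hef0
    (by rw [mul_assoc, ← hcomm, he.mul_self_mul]) (he.mul_self_mul f)
  have heff : e * f = f := hprim f (e * f) hf hf0 hef hef0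
    (hf.mul_mul_self e) (by rw [hcomm, hf.mul_self_mul])
  exact hne (hefe.symm.trans heff)

theorem IsIdempotentElem.exists_isOpen_inter_eq_singleton {S : Type*} [SemigroupWithZero S]
    [TopologicalSpace S] [ContinuousMul S] [T1Space S]
    (horth : ∀ e f : S, IsIdempotentElem e → IsIdempotentElem f → e ≠ f → e * f = 0) {e : S}
    (he : IsIdempotentElem e) (he0 : e ≠ 0) :
    ∃ V : Set S, IsOpen V ∧ V ∩ {x | IsIdempotentElem x} = {e} := by
  refine ⟨(e * ·) ⁻¹' {0}ᶜ, isOpen_compl_singleton.preimage (continuous_const.mul continuous_id),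
    ?_⟩
  ext f
  simp only [mem_inter_iff, mem_preimage, mem_compl_iff, mem_singleton_iff, mem_ofPred_eq]
  constructor
  · rintro ⟨hef, hf⟩
    by_contra hne
    exact hef (horth e f he hf (Ne.symm hne))
  · rintro rfl
    exact ⟨by rwa [he.eq], he⟩

theorem idempotents_isolated_and_compact_of_pseudocompact_primitive_general
    {S : Type*} [SemigroupWithZero S] [TopologicalSpace S] [T2Space S]
    (continuous_mul : Continuous fun p : S × S => p.1 * p.2)
    (inv : S → S) (hinv : IsInverseSemigroup S inv) (hinvc : Continuous inv)
    (hprim : IsPrimitiveInverse S)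
    (hpc : IsPseudocompact S) :
    (∀ e : S, IsIdempotentElem e → e ≠ 0 →
        ∃ V : Set S, IsOpen V ∧ V ∩ {x : S | IsIdempotentElem x} = {e}) ∧
      IsCompact {x : S | IsIdempotentElem x} ∧
      (∀ e f : S, IsIdempotentElem e → IsIdempotentElem f →
        e * f = f * e ∧ IsIdempotentElem (e * f)) := by
  have : ContinuousMul S := ⟨continuous_mul⟩
  have hisol : ∀ e : S, IsIdempotentElem e → e ≠ 0 →
      ∃ V : Set S, IsOpen V ∧ V ∩ {x : S | IsIdempotentElem x} = {e} := fun e he he0 =>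
    he.exists_isOpen_inter_eq_singleton (fun _ _ => hprim.mul_eq_zero_of_ne hinv) he0
  refine ⟨hisol, ?_, fun e f he hf =>
    ⟨hinv.mul_comm_of_isIdempotentElem he hf, hinv.isIdempotentElem_mul he hf⟩⟩
  have hq : Continuous fun x => x * inv x := continuous_id.mul hinvc
  have hfib : ∀ e ≠ (0 : S), IsOpen ((fun x => x * inv x) ⁻¹' {e}) := by
    intro e he0
    by_cases he : IsIdempotentElem e
    · obtain ⟨V, hV, hVe⟩ := hisol e he he0
      exact isOpen_preimage_singleton_of_inter_range_eq hq hV (by rwa [hinv.range_mul_inv])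
    · rw [preimage_singleton_eq_empty.2 (by rwa [hinv.range_mul_inv])]
      exact isOpen_empty
  have hE := hpc.isCompact_insert_range hq 0 hfib
  have h0 : (0 : S) ∈ {x : S | IsIdempotentElem x} := IsIdempotentElem.zero
  rwa [hinv.range_mul_inv, insert_eq_of_mem h0] at hE

/-- Let `S` be a Hausdorff pseudocompact primitive topological
inverse semigroup, written as the orthogonal sum of a family of topological
Brandt semigroups with zero. Then every non-zero idempotent of `S` is an
isolated point of the set `E(S)` of idempotents, and `E(S)` is a compact
(topological) semilattice. -/
theorem idempotents_isolated_and_compact_of_pseudocompact_primitive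
    {S : Type*} [SemigroupWithZero S] [TopologicalSpace S] [T2Space S]
    (continuous_mul : Continuous fun p : S × S => p.1 * p.2)
    (inv : S → S) (hinv : IsInverseSemigroup S inv) (hinvc : Continuous inv)
    (hnt : Nontrivial S) (hprim : IsPrimitiveInverse S)
    (hpc : IsPseudocompact S)
    (hdecomp : BrandtDecomposition S) :
    (∀ e : S, IsIdempotentElem e → e ≠ 0 →
        ∃ V : Set S, IsOpen V ∧ V ∩ {x : S | IsIdempotentElem x} = {e}) ∧
      IsCompact {x : S | IsIdempotentElem x} ∧
      (∀ e f : S, IsIdempotentElem e → IsIdempotentElem f →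
        e * f = f * e ∧ IsIdempotentElem (e * f)) :=
  idempotents_isolated_and_compact_of_pseudocompact_primitive_general continuous_mul inv hinv hinvc
    hprim hpc
end

section
/- Let G be a group and suppose the Brandt 1-extension B_1(G) (i.e. G with an adjoined zero) is a topological inverse semigroup. Let U be a non-empty open subset of B_1(G) with U ≠ {0}, and let A be a dense subset of B_1(G). Then: (i) if 0 is an isolated point of B_1(G), then A·U·A = B_1(G); (ii) if 0 is a non-isolated point of B_1(G), then (A ∪ {0})·U·(A ∪ {0}) = B_1(G). -/
open Topology Pointwise

/-- Let `G` be a group and suppose the Brandt `1`-extension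
`B_1(G)` (i.e. `G` with an adjoined zero) is a (Hausdorff) topological inverse
semigroup. Let `U` be a non-empty open subset of `B_1(G)` with `U ≠ {0}` and
let `A` be a dense subset of `B_1(G)`. Then (i) if `0` is an isolated point of
`B_1(G)` then `A·U·A = B_1(G)`; (ii) if `0` is a non-isolated point of `B_1(G)`
then `(A ∪ {0})·U·(A ∪ {0}) = B_1(G)`. -/
theorem dense_mul_open_mul_dense_brandt_one
    {G : Type*} [Group G]
    [TopologicalSpace (WithZero G)] [T2Space (WithZero G)]
    (continuous_mul : Continuous fun p : WithZero G × WithZero G => p.1 * p.2)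
    (inv : WithZero G → WithZero G)
    (hinv : IsInverseSemigroup (WithZero G) inv) (hinvc : Continuous inv)
    (U : Set (WithZero G)) (hUopen : IsOpen U) (hUne : U.Nonempty)
    (hU0 : U ≠ {0}) (A : Set (WithZero G)) (hA : Dense A) :
    (IsOpen ({0} : Set (WithZero G)) → A * U * A = Set.univ) ∧
      (¬ IsOpen ({0} : Set (WithZero G)) →
        (A ∪ {0}) * U * (A ∪ {0}) = Set.univ) := by
  -- `inv` agrees with the group-with-zero inverse
  have hinv_eq : ∀ x : WithZero G, inv x = x⁻¹ := by
    intro x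
    rcases eq_or_ne x 0 with rfl | hx
    · rw [inv_zero]
      exact (hinv.inv_unique 0 0 (by simp) (by simp)).symm
    · exact (hinv.inv_unique x x⁻¹
        (by rw [mul_inv_cancel₀ hx, one_mul])
        (by rw [inv_mul_cancel₀ hx, one_mul])).symm
  obtain ⟨g, hgU, hg0⟩ : ∃ g ∈ U, g ≠ 0 := by
    by_contra h
    push_neg at h
    exact hU0 (Set.eq_singleton_iff_nonempty_unique_mem.2 ⟨hUne, h⟩)
  have key : ∀ t : WithZero G, t ≠ 0 → t ∈ A * U * A := by
    intro t ht
    have c1 : Continuous fun p : WithZero G × WithZero G => inv p.1 * t :=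
      continuous_mul.comp ((hinvc.comp continuous_fst).prodMk continuous_const)
    have hcont : Continuous fun p : WithZero G × WithZero G =>
        inv p.1 * t * inv p.2 :=
      continuous_mul.comp (c1.prodMk (hinvc.comp continuous_snd))
    set W : Set (WithZero G × WithZero G) :=
      ((fun p : WithZero G × WithZero G => inv p.1 * t * inv p.2) ⁻¹' U) ∩
        (({0}ᶜ : Set (WithZero G)) ×ˢ ({0}ᶜ : Set (WithZero G))) with hW
    have hWopen : IsOpen W :=
      (hUopen.preimage hcont).inter
        ((isClosed_singleton.isOpen_compl).prod (isClosed_singleton.isOpen_compl))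
    have hgt : (g⁻¹ * t : WithZero G) ≠ 0 :=
      mul_ne_zero (inv_ne_zero hg0) ht
    have hWne : W.Nonempty := by
      refine ⟨(1, g⁻¹ * t), ?_, ?_, ?_⟩
      · show inv 1 * t * inv (g⁻¹ * t) ∈ U
        rw [hinv_eq, hinv_eq, mul_inv_rev, inv_inv, inv_one, one_mul,
          ← mul_assoc, mul_inv_cancel₀ ht, one_mul]
        exact hgU
      · exact one_ne_zero
      · exact hgt
    obtain ⟨p, hpA, hpW⟩ := (hA.prod hA).exists_mem_open hWopen hWne
    obtain ⟨haA, hbA⟩ := hpA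
    obtain ⟨huU, ha0, hb0⟩ := hpW
    set a := p.1
    set b := p.2
    have ha0 : a ≠ 0 := ha0
    have hb0 : b ≠ 0 := hb0
    refine ⟨a * (inv a * t * inv b), ⟨a, haA, inv a * t * inv b, huU, rfl⟩,
      b, hbA, ?_⟩
    rw [hinv_eq, hinv_eq]
    calc a * (a⁻¹ * t * b⁻¹) * b = a * a⁻¹ * t * (b⁻¹ * b) := by
          simp only [mul_assoc]
      _ = t := by rw [mul_inv_cancel₀ ha0, inv_mul_cancel₀ hb0, one_mul, mul_one]
  constructor
  · intro h0
    have h0A : (0 : WithZero G) ∈ A := by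
      obtain ⟨x, hxA, hx0⟩ := hA.exists_mem_open h0 ⟨0, rfl⟩
      rwa [Set.mem_singleton_iff.1 hx0] at hxA
    ext t
    simp only [Set.mem_univ, iff_true]
    rcases eq_or_ne t 0 with rfl | ht
    · exact ⟨0 * g, ⟨0, h0A, g, hgU, rfl⟩, 0, h0A, by simp⟩
    · exact key t ht
  · intro _
    ext t
    simp only [Set.mem_univ, iff_true]
    rcases eq_or_ne t 0 with rfl | ht
    · exact ⟨0 * g, ⟨0, Or.inr rfl, g, hgU, rfl⟩, 0, Or.inr rfl, by simp⟩
    · obtain ⟨x, ⟨a, haA, u, huU, hx⟩, b, hbA, htb⟩ := key t ht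
      exact ⟨x, ⟨a, Or.inl haA, u, huU, hx⟩, b, Or.inl hbA, htb⟩
end

section
/- Let S be a Hausdorff primitive topological inverse semigroup which is the orthogonal sum of a family {B_{λ_i}(G_i)}_{i∈I} of topological Brandt semigroups with zero, where |I| > 1. Let U be a non-empty open subset of S such that (U ∩ B_{λ_i}(G_i)) \ {0} ≠ ∅ for every i ∈ I. Then A·U·A = S for every dense subset A of S. -/
open Topology Pointwise

/-! A non-zero target `s = (α, g, β)` of the summand `i` is reached by sandwiching a point
`u = a⁻¹ s b⁻¹` of `U` between `a, b ∈ A` taken from the `(α, γ)`- and `(δ, β)`-slots, where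
`(γ, h, δ) ∈ U`: each slot of a Brandt summand is open (it is where `x ↦ (α, 1, α) x (β, 1, β)` does
not vanish), and `(a, b) ↦ a⁻¹ s b⁻¹` is continuous, so the dense set `A × A` meets the open set of
pairs for which `a⁻¹ s b⁻¹ ∈ U`. The target `0` is `a u b` with `a ∈ A` in one summand and
`u ∈ U` in another. -/

theorem mem_dense_mul_open_mul_dense {S : Type*} [Semigroup S] [TopologicalSpace S]
    [ContinuousMul S] {inv : S → S} (hinvc : Continuous inv) {A U P Q : Set S}
    (hA : Dense A) (hU : IsOpen U) (hP : IsOpen P) (hQ : IsOpen Q) {s p q : S}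
    (hp : p ∈ P) (hq : q ∈ Q) (hpq : inv p * s * inv q ∈ U)
    (hPs : ∀ a ∈ P, a * inv a * s = s) (hQs : ∀ b ∈ Q, s * inv b * b = s) :
    s ∈ A * U * A := by
  have hΩ : IsOpen ({ab : S × S | inv ab.1 * s * inv ab.2 ∈ U} ∩ P ×ˢ Q) :=
    (hU.preimage (by fun_prop)).inter (hP.prod hQ)
  obtain ⟨⟨a, b⟩, ⟨haA, hbA⟩, hab, ha, hb⟩ :=
    (hA.prod hA).exists_mem_open hΩ ⟨(p, q), hpq, hp, hq⟩
  have hs : a * (inv a * s * inv b) * b = s :=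
    calc a * (inv a * s * inv b) * b = a * inv a * s * (inv b * b) := by simp only [mul_assoc]
      _ = s := by rw [hPs a ha, ← mul_assoc, hQs b hb]
  exact hs ▸ Set.mul_mem_mul (Set.mul_mem_mul haA hab) hbA

namespace OrthSum

variable {I : Type*} {ι : I → Type*} {G : I → Type*} [∀ i, Mul (G i)]

open Classical in
theorem elem_mul_elem_eq_ite (i : I) (α : ι i) (a : G i) (β γ : ι i) (b : G i) (δ : ι i) :
    (elem i α a β : OrthSum I ι G) * elem i γ b δ =
      if β = γ then elem i α (a * b) δ else 0 := by
  change (if h : i = i then _ else none) = _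
  rw [dif_pos rfl]
  rfl

open Classical in
theorem elem_mul_elem_of_ne {i j : I} (h : i ≠ j) (α : ι i) (a : G i) (β : ι i)
    (γ : ι j) (b : G j) (δ : ι j) :
    (elem i α a β : OrthSum I ι G) * elem j γ b δ = 0 := by
  change (if h : i = j then _ else none) = _
  rw [dif_neg h]
  rfl

end OrthSum

namespace BrandtDecomposition

attribute [local instance] instGroup instNonempty

variable {S : Type*} [SemigroupWithZero S] (d : BrandtDecomposition S)

noncomputable def elem (i : d.I) (α : d.ι i) (g : d.G i) (β : d.ι i) : S :=
  d.e.symm (OrthSum.elem i α g β)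

theorem e_elem (i : d.I) (α : d.ι i) (g : d.G i) (β : d.ι i) :
    d.e (d.elem i α g β) = OrthSum.elem i α g β :=
  d.e.apply_symm_apply _

theorem eq_elem_of_e_eq {x : S} {i : d.I} {α β : d.ι i} {g : d.G i}
    (h : d.e x = OrthSum.elem i α g β) : x = d.elem i α g β :=
  d.e.eq_symm_apply.2 h

theorem e_symm_zero : d.e.symm 0 = 0 :=
  d.e.symm_apply_eq.2 d.map_zero.symm

theorem elem_ne_zero (i : d.I) (α : d.ι i) (g : d.G i) (β : d.ι i) : d.elem i α g β ≠ 0 := by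
  rw [elem, ← d.e_symm_zero, Ne, d.e.symm.apply_eq_iff_eq]
  exact Option.some_ne_none _

theorem eq_zero_or_exists_eq_elem (x : S) :
    x = 0 ∨ ∃ (i : d.I) (α : d.ι i) (g : d.G i) (β : d.ι i), x = d.elem i α g β := by
  rcases h : d.e x with _ | ⟨i, α, g, β⟩
  · exact .inl (d.e.eq_symm_apply.2 h |>.trans d.e_symm_zero)
  · exact .inr ⟨i, α, g, β, d.eq_elem_of_e_eq h⟩

open Classical in
theorem elem_mul_elem_eq_ite (i : d.I) (α : d.ι i) (a : d.G i) (β γ : d.ι i) (b : d.G i)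
    (δ : d.ι i) :
    d.elem i α a β * d.elem i γ b δ = if β = γ then d.elem i α (a * b) δ else 0 := by
  apply d.e.injective
  rw [d.map_mul, d.e_elem, d.e_elem, OrthSum.elem_mul_elem_eq_ite]
  split_ifs
  · rw [d.e_elem]
  · rw [d.map_zero]

theorem elem_mul_elem (i : d.I) (α : d.ι i) (a : d.G i) (β : d.ι i) (b : d.G i) (δ : d.ι i) :
    d.elem i α a β * d.elem i β b δ = d.elem i α (a * b) δ := by
  rw [d.elem_mul_elem_eq_ite, if_pos rfl]

theorem elem_mul_elem_of_ne {i j : d.I} (h : i ≠ j) (α : d.ι i) (a : d.G i) (β : d.ι i)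
    (γ : d.ι j) (b : d.G j) (δ : d.ι j) :
    d.elem i α a β * d.elem j γ b δ = 0 := by
  apply d.e.injective
  rw [d.map_mul, d.e_elem, d.e_elem, OrthSum.elem_mul_elem_of_ne h, d.map_zero]

theorem inv_elem {inv : S → S} (hinv : IsInverseSemigroup S inv)
    (i : d.I) (α : d.ι i) (g : d.G i) (β : d.ι i) :
    inv (d.elem i α g β) = d.elem i β g⁻¹ α := by
  refine (hinv.inv_unique _ _ ?_ ?_).symm <;>
    simp only [elem_mul_elem, mul_inv_cancel_right, inv_mul_cancel_right]

def slot (i : d.I) (α β : d.ι i) : Set S :=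
  Set.range fun g => d.elem i α g β

theorem elem_mem_slot (i : d.I) (α : d.ι i) (g : d.G i) (β : d.ι i) :
    d.elem i α g β ∈ d.slot i α β :=
  ⟨g, rfl⟩

theorem mem_slot_iff {i : d.I} {α β : d.ι i} {x : S} :
    x ∈ d.slot i α β ↔ d.elem i α 1 α * x * d.elem i β 1 β ≠ 0 := by
  constructor
  · rintro ⟨g, rfl⟩
    simpa only [elem_mul_elem, one_mul, mul_one] using d.elem_ne_zero i α g β
  · intro h
    rcases d.eq_zero_or_exists_eq_elem x with rfl | ⟨j, α', g, β', rfl⟩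
    · simp at h
    obtain rfl | hij := eq_or_ne i j
    · classical
      obtain rfl | hα := eq_or_ne α α'
      · obtain rfl | hβ := eq_or_ne β' β
        · exact d.elem_mem_slot i α g β'
        · simp [elem_mul_elem, elem_mul_elem_eq_ite, hβ] at h
      · simp [elem_mul_elem_eq_ite, hα] at h
    · simp [d.elem_mul_elem_of_ne hij] at h

theorem isOpen_slot [TopologicalSpace S] [T1Space S] [ContinuousMul S] (i : d.I) (α β : d.ι i) :
    IsOpen (d.slot i α β) := by
  simp only [Set.ext_iff.2 fun _ => d.mem_slot_iff]
  exact isOpen_ne.preimage (by fun_prop)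

variable [TopologicalSpace S] [T1Space S] [ContinuousMul S] {A U : Set S}

theorem zero_mem_dense_mul_mul {i j : d.I} (hij : i ≠ j) (hA : Dense A) {γ δ : d.ι j}
    {h : d.G j} (hu : d.elem j γ h δ ∈ U) :
    0 ∈ A * U * A := by
  obtain ⟨α⟩ := d.instNonempty i
  obtain ⟨_, haA, c, rfl⟩ :=
    hA.exists_mem_open (d.isOpen_slot i α α) ⟨_, d.elem_mem_slot i α 1 α⟩
  obtain ⟨b, hbA⟩ := hA.nonempty
  have h0 : d.elem i α c α * d.elem j γ h δ * b = 0 := by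
    rw [d.elem_mul_elem_of_ne hij, zero_mul]
  exact h0 ▸ Set.mul_mem_mul (Set.mul_mem_mul haA hu) hbA

theorem elem_mem_dense_mul_mul {inv : S → S} (hinv : IsInverseSemigroup S inv)
    (hinvc : Continuous inv) (hA : Dense A) (hU : IsOpen U) {i : d.I} {γ δ : d.ι i}
    {h : d.G i} (hu : d.elem i γ h δ ∈ U) (α : d.ι i) (g : d.G i) (β : d.ι i) :
    d.elem i α g β ∈ A * U * A := by
  refine mem_dense_mul_open_mul_dense hinvc hA hU (d.isOpen_slot i α γ) (d.isOpen_slot i δ β)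
    (d.elem_mem_slot i α (g * h⁻¹) γ) (d.elem_mem_slot i δ 1 β) ?_ ?_ ?_
  · simpa only [d.inv_elem hinv, elem_mul_elem, mul_inv_rev, inv_inv, inv_one, mul_one,
      inv_mul_cancel_right] using hu
  · rintro _ ⟨c, rfl⟩
    simp only [d.inv_elem hinv, elem_mul_elem, mul_inv_cancel, one_mul]
  · rintro _ ⟨c, rfl⟩
    simp only [d.inv_elem hinv, elem_mul_elem, inv_mul_cancel_right]

end BrandtDecomposition

theorem dense_mul_open_mul_dense_eq_univ_primitive_general
    {S : Type*} [SemigroupWithZero S] [TopologicalSpace S] [T2Space S]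
    (continuous_mul : Continuous fun p : S × S => p.1 * p.2)
    (inv : S → S) (hinv : IsInverseSemigroup S inv) (hinvc : Continuous inv)
    (d : BrandtDecomposition S) (hI : Nontrivial d.I)
    (U : Set S) (hUopen : IsOpen U)
    (hU : ∀ i : d.I, ∃ x ∈ U, ∃ (α β : d.ι i) (g : d.G i),
      d.e x = OrthSum.elem i α g β) :
    ∀ A : Set S, Dense A → A * U * A = Set.univ := by
  intro A hA
  have : ContinuousMul S := ⟨continuous_mul⟩
  refine Set.eq_univ_of_forall fun s => ?_
  have hUelem (i : d.I) : ∃ (γ δ : d.ι i) (h : d.G i), d.elem i γ h δ ∈ U := by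
    obtain ⟨u, huU, γ, δ, h, hu⟩ := hU i
    exact ⟨γ, δ, h, d.eq_elem_of_e_eq hu ▸ huU⟩
  rcases d.eq_zero_or_exists_eq_elem s with rfl | ⟨i, α, g, β, rfl⟩
  · obtain ⟨i, j, hij⟩ := hI.exists_pair_ne
    obtain ⟨γ, δ, h, hu⟩ := hUelem j
    exact d.zero_mem_dense_mul_mul hij hA hu
  · obtain ⟨γ, δ, h, hu⟩ := hUelem i
    exact d.elem_mem_dense_mul_mul hinv hinvc hA hUopen hu α g β

/-- Let `S` be a Hausdorff primitive topological inverse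
semigroup which is the orthogonal sum of a family `{B_{λ i}(G i)}_{i ∈ I}` of
topological Brandt semigroups with zero, where `|I| > 1`. Let `U` be a
non-empty open subset of `S` meeting every summand in a non-zero element.
Then `A·U·A = S` for every dense subset `A` of `S`. -/
theorem dense_mul_open_mul_dense_eq_univ_primitive
    {S : Type*} [SemigroupWithZero S] [TopologicalSpace S] [T2Space S]
    (continuous_mul : Continuous fun p : S × S => p.1 * p.2)
    (inv : S → S) (hinv : IsInverseSemigroup S inv) (hinvc : Continuous inv)
    (hnt : Nontrivial S) (hprim : IsPrimitiveInverse S)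
    (d : BrandtDecomposition S) (hI : Nontrivial d.I)
    (U : Set S) (hUopen : IsOpen U) (hUne : U.Nonempty)
    (hU : ∀ i : d.I, ∃ x ∈ U, ∃ (α β : d.ι i) (g : d.G i),
      d.e x = OrthSum.elem i α g β) :
    ∀ A : Set S, Dense A → A * U * A = Set.univ :=
  dense_mul_open_mul_dense_eq_univ_primitive_general continuous_mul inv hinv hinvc d hI U hUopen hU
end
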